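/- arXiv:math/0509029 — 5 statements merged into one kernel-verified Lean document; each statement's English description precedes it below -/
import Mathlib

section
/- If T is a bounded linear operator on a complex Hilbert space H, λ a nonzero complex number, r > 0, and ‖T − λI‖ ≤ r, then ‖T‖ − w(T) ≤ r²/(2|λ|). -/
/-! For a unit vector `x`, expanding `‖Tx - λx‖² ≤ r²` and bounding `Re ⟨Tx, λx⟩ ≤ |λ| |⟨Tx, x⟩|`
gives `‖Tx‖² + |λ|² - 2|λ| |⟨Tx, x⟩| ≤ r²`; by AM–GM `2|λ|‖Tx‖ ≤ ‖Tx‖² + |λ|²`, hence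
`2|λ| (‖Tx‖ - w(T)) ≤ r²`, and the supremum over unit vectors `x` gives the claim. -/

noncomputable def numRadius {H : Type*} [NormedAddCommGroup H] [InnerProductSpace ℂ H]
    (T : H →L[ℂ] H) : ℝ :=
  sSup {r : ℝ | ∃ x : H, ‖x‖ = 1 ∧ r = ‖(inner ℂ (T x) x : ℂ)‖}

open RCLike in
theorem two_mul_norm_mul_sub_norm_inner_le_norm_sub_smul_sq {𝕜 E : Type*} [RCLike 𝕜]
    [NormedAddCommGroup E] [InnerProductSpace 𝕜 E] (u y : E) (c : 𝕜) :
    2 * ‖c‖ * (‖u‖ * ‖y‖ - ‖(inner 𝕜 u y : 𝕜)‖) ≤ ‖u - c • y‖ ^ 2 := by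
  have hre : re (inner 𝕜 u (c • y) : 𝕜) ≤ ‖c‖ * ‖(inner 𝕜 u y : 𝕜)‖ := by
    calc re (inner 𝕜 u (c • y) : 𝕜) ≤ ‖(inner 𝕜 u (c • y) : 𝕜)‖ := re_le_norm _
      _ = ‖c‖ * ‖(inner 𝕜 u y : 𝕜)‖ := by rw [inner_smul_right, norm_mul]
  rw [norm_sub_sq (𝕜 := 𝕜), norm_smul]
  nlinarith [sq_nonneg (‖u‖ - ‖c‖ * ‖y‖)]

section NumRadius

variable {H : Type*} [NormedAddCommGroup H] [InnerProductSpace ℂ H]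

theorem numRadius_bddAbove (T : H →L[ℂ] H) :
    BddAbove {r : ℝ | ∃ x : H, ‖x‖ = 1 ∧ r = ‖(inner ℂ (T x) x : ℂ)‖} := by
  refine ⟨‖T‖, ?_⟩
  rintro _ ⟨x, hx, rfl⟩
  calc ‖(inner ℂ (T x) x : ℂ)‖ ≤ ‖T x‖ * ‖x‖ := norm_inner_le_norm _ _
    _ ≤ ‖T‖ * ‖x‖ * ‖x‖ := by gcongr; exact T.le_opNorm x
    _ = ‖T‖ := by rw [hx, mul_one, mul_one]

theorem norm_inner_le_numRadius (T : H →L[ℂ] H) {x : H} (hx : ‖x‖ = 1) :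
    ‖(inner ℂ (T x) x : ℂ)‖ ≤ numRadius T :=
  le_csSup (numRadius_bddAbove T) ⟨x, hx, rfl⟩

theorem numRadius_nonneg (T : H →L[ℂ] H) : 0 ≤ numRadius T :=
  Real.sSup_nonneg fun _ ⟨_, _, hr⟩ => hr ▸ norm_nonneg _

end NumRadius

theorem stmt_1_general {H : Type*} [NormedAddCommGroup H] [InnerProductSpace ℂ H]
    (T : H →L[ℂ] H) (lam : ℂ) (hlam : lam ≠ 0) (r : ℝ)
    (h : ‖T - lam • (1 : H →L[ℂ] H)‖ ≤ r) :
    ‖T‖ - numRadius T ≤ r ^ 2 / (2 * ‖lam‖) := by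
  have hlam' : 0 < 2 * ‖lam‖ := by positivity
  suffices ‖T‖ ≤ numRadius T + r ^ 2 / (2 * ‖lam‖) by linarith
  refine T.opNorm_le_of_unit_norm (by have := numRadius_nonneg T; positivity) fun x hx => ?_
  have hdist : ‖T x - lam • x‖ ≤ r := by
    simpa [hx] using (T - lam • (1 : H →L[ℂ] H)).le_of_opNorm_le h x
  have hkey := two_mul_norm_mul_sub_norm_inner_le_norm_sub_smul_sq (T x) x lam
  rw [hx, mul_one] at hkey
  have hw := norm_inner_le_numRadius T hx
  rw [← sub_le_iff_le_add', le_div_iff₀ hlam']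
  calc (‖T x‖ - numRadius T) * (2 * ‖lam‖)
      ≤ 2 * ‖lam‖ * (‖T x‖ - ‖(inner ℂ (T x) x : ℂ)‖) := by nlinarith
    _ ≤ ‖T x - lam • x‖ ^ 2 := hkey
    _ ≤ r ^ 2 := by gcongr

theorem stmt_1 {H : Type*} [NormedAddCommGroup H] [InnerProductSpace ℂ H] [CompleteSpace H]
    (T : H →L[ℂ] H) (lam : ℂ) (hlam : lam ≠ 0) (r : ℝ) (hr : 0 < r)
    (h : ‖T - lam • (1 : H →L[ℂ] H)‖ ≤ r) :
    ‖T‖ - numRadius T ≤ r ^ 2 / (2 * ‖lam‖) :=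
  stmt_1_general T lam hlam r h
end

section
/- Let A be a bounded linear operator on a complex Hilbert space and φ, Φ ∈ ℂ with Φ ≠ −φ, Φ ≠ φ. If Re⟨Φx − Ax, Ax − φx⟩ ≥ 0 for all unit vectors x, then ‖A − ((Φ + φ)/2)·I‖ ≤ |Φ − φ|/2. -/
/-!
Put `c = (Φ + φ)/2`, `d = (Φ - φ)/2` and `y = A x - c x`. Then `Φ x - A x = d x - y` and
`A x - φ x = d x + y`, and for any `u, v` the cross terms of `Re ⟪u - v, u + v⟫` cancel, leaving
`‖u‖² - ‖v‖²`. So the hypothesis says exactly `‖(A - c I) x‖ ≤ |d|` on unit vectors.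
-/

open RCLike

section

variable {𝕜 E : Type*} [RCLike 𝕜] [NormedAddCommGroup E] [InnerProductSpace 𝕜 E]

theorem re_inner_sub_add_eq_norm_sq_sub_norm_sq (u v : E) :
    re (inner 𝕜 (u - v) (u + v)) = ‖u‖ ^ 2 - ‖v‖ ^ 2 := by
  simp only [inner_sub_left, inner_add_right, map_add, map_sub, inner_re_symm (𝕜 := 𝕜) v u,
    ← norm_sq_eq_re_inner (𝕜 := 𝕜)]
  ring

theorem re_inner_smul_sub_apply_apply_sub_smul (A : E →L[𝕜] E) (a b : 𝕜) (x : E) :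
    re (inner 𝕜 (a • x - A x) (A x - b • x)) =
      ‖((a - b) / 2) • x‖ ^ 2 - ‖(A - ((a + b) / 2) • (1 : E →L[𝕜] E)) x‖ ^ 2 := by
  have happly : (A - ((a + b) / 2) • (1 : E →L[𝕜] E)) x = A x - ((a + b) / 2) • x := by simp
  rw [happly, ← re_inner_sub_add_eq_norm_sq_sub_norm_sq (𝕜 := 𝕜)]
  congr 2 <;> module

theorem ContinuousLinearMap.norm_sub_smul_one_le_of_re_inner_nonneg (A : E →L[𝕜] E) (a b : 𝕜)
    (h : ∀ x : E, ‖x‖ = 1 → 0 ≤ re (inner 𝕜 (a • x - A x) (A x - b • x))) :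
    ‖A - ((a + b) / 2) • (1 : E →L[𝕜] E)‖ ≤ ‖a - b‖ / 2 := by
  refine opNorm_le_of_unit_norm (by positivity) fun x hx => ?_
  have hsq := h x hx
  rw [re_inner_smul_sub_apply_apply_sub_smul, sub_nonneg, norm_smul, hx, mul_one, norm_div,
    RCLike.norm_two] at hsq
  exact (sq_le_sq₀ (norm_nonneg _) (by positivity)).1 hsq

end

theorem stmt_5_general {H : Type*} [NormedAddCommGroup H] [InnerProductSpace ℂ H]
    (A : H →L[ℂ] H) (phi Phi : ℂ)
    (h : ∀ x : H, ‖x‖ = 1 → 0 ≤ (inner ℂ (Phi • x - A x) (A x - phi • x) : ℂ).re) :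
    ‖A - ((Phi + phi) / 2) • (1 : H →L[ℂ] H)‖ ≤ ‖Phi - phi‖ / 2 :=
  A.norm_sub_smul_one_le_of_re_inner_nonneg Phi phi h

theorem stmt_5 {H : Type*} [NormedAddCommGroup H] [InnerProductSpace ℂ H] [CompleteSpace H]
    (A : H →L[ℂ] H) (phi Phi : ℂ) (h1 : Phi ≠ -phi) (h2 : Phi ≠ phi)
    (h : ∀ x : H, ‖x‖ = 1 → 0 ≤ (inner ℂ (Phi • x - A x) (A x - phi • x) : ℂ).re) :
    ‖A - ((Phi + phi) / 2) • (1 : H →L[ℂ] H)‖ ≤ ‖Phi - phi‖ / 2 :=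
  stmt_5_general A phi Phi h
end

section
/- If T is a bounded linear operator on a complex Hilbert space, λ ∈ ℂ, r > 0, ‖T − λI‖ ≤ r and |λ| = w(T), then ‖T‖² − w(T)² ≤ r². -/
open RCLike

theorem norm_sq_eq_norm_sub_smul_sq_add_re_inner {𝕜 E : Type*} [RCLike 𝕜]
    [NormedAddCommGroup E] [InnerProductSpace 𝕜 E] (a : 𝕜) (x y : E) :
    ‖y‖ ^ 2 = ‖y - a • x‖ ^ 2 + 2 * re (a * inner 𝕜 y x) - ‖a‖ ^ 2 * ‖x‖ ^ 2 := by
  rw [norm_sub_sq (𝕜 := 𝕜), inner_smul_right, norm_smul]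
  ring

namespace ContinuousLinearMap

theorem opNorm_sq_le_of_norm_apply_sq_le {𝕜 E F : Type*} [NontriviallyNormedField 𝕜]
    [SeminormedAddCommGroup E] [SeminormedAddCommGroup F] [NormedSpace 𝕜 E] [NormedSpace 𝕜 F]
    (f : E →L[𝕜] F) {K : ℝ} (hK : 0 ≤ K)
    (hf : ∀ x, ‖f x‖ ^ 2 ≤ K * ‖x‖ ^ 2) : ‖f‖ ^ 2 ≤ K := by
  have hle : ‖f‖ ≤ √K := f.opNorm_le_bound (Real.sqrt_nonneg K) fun x => by
    rw [← Real.sqrt_sq (norm_nonneg (f x)), ← Real.sqrt_sq (norm_nonneg x),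
      ← Real.sqrt_mul hK]
    exact Real.sqrt_le_sqrt (hf x)
  calc ‖f‖ ^ 2 ≤ √K ^ 2 := pow_le_pow_left₀ (norm_nonneg f) hle 2
    _ = K := Real.sq_sqrt hK

variable {H : Type*} [NormedAddCommGroup H] [InnerProductSpace ℂ H]

theorem numRadius_bddAbove (T : H →L[ℂ] H) :
    BddAbove {r : ℝ | ∃ x : H, ‖x‖ = 1 ∧ r = ‖(inner ℂ (T x) x : ℂ)‖} := by
  refine ⟨‖T‖, ?_⟩
  rintro s ⟨x, hx, rfl⟩
  calc ‖(inner ℂ (T x) x : ℂ)‖ ≤ ‖T x‖ * ‖x‖ := norm_inner_le_norm _ _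
    _ ≤ ‖T‖ * ‖x‖ * ‖x‖ := by gcongr; exact T.le_opNorm x
    _ = ‖T‖ := by rw [hx, mul_one, mul_one]

theorem norm_inner_apply_self_le_numRadius (T : H →L[ℂ] H) (x : H) :
    ‖(inner ℂ (T x) x : ℂ)‖ ≤ numRadius T * ‖x‖ ^ 2 := by
  rcases eq_or_ne x 0 with rfl | hx
  · simp
  have hx' : ‖x‖ ≠ 0 := norm_ne_zero_iff.mpr hx
  set u : H := ((‖x‖⁻¹ : ℝ) : ℂ) • x
  have hu : ‖u‖ = 1 := by
    rw [norm_smul, Complex.norm_real, norm_inv, norm_norm, inv_mul_cancel₀ hx']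
  have hTu : ‖(inner ℂ (T u) u : ℂ)‖ = ‖(inner ℂ (T x) x : ℂ)‖ / ‖x‖ ^ 2 := by
    simp only [u, map_smul, inner_smul_left, inner_smul_right, norm_mul, Complex.norm_conj,
      Complex.norm_real, norm_inv, norm_norm]
    field_simp
  have hle : ‖(inner ℂ (T u) u : ℂ)‖ ≤ numRadius T :=
    le_csSup (numRadius_bddAbove T) ⟨u, hu, rfl⟩
  rwa [hTu, div_le_iff₀ (by positivity)] at hle

theorem norm_apply_sq_le_norm_sub_smul_one_sq_add (T : H →L[ℂ] H) (a : ℂ) (x : H) :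
    ‖T x‖ ^ 2 ≤
      (‖T - a • (1 : H →L[ℂ] H)‖ ^ 2 + 2 * ‖a‖ * numRadius T - ‖a‖ ^ 2) * ‖x‖ ^ 2 := by
  have hsub : ‖T x - a • x‖ ≤ ‖T - a • (1 : H →L[ℂ] H)‖ * ‖x‖ :=
    (T - a • (1 : H →L[ℂ] H)).le_opNorm x
  have hre : re (a * inner ℂ (T x) x) ≤ ‖a‖ * (numRadius T * ‖x‖ ^ 2) :=
    calc re (a * inner ℂ (T x) x) ≤ ‖a * inner ℂ (T x) x‖ := re_le_norm _
      _ = ‖a‖ * ‖(inner ℂ (T x) x : ℂ)‖ := norm_mul _ _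
      _ ≤ ‖a‖ * (numRadius T * ‖x‖ ^ 2) := by
        gcongr; exact norm_inner_apply_self_le_numRadius T x
  rw [norm_sq_eq_norm_sub_smul_sq_add_re_inner a x (T x)]
  nlinarith [pow_le_pow_left₀ (norm_nonneg _) hsub 2]

end ContinuousLinearMap

theorem stmt_7_general {H : Type*} [NormedAddCommGroup H] [InnerProductSpace ℂ H]
    (T : H →L[ℂ] H) (lam : ℂ) (r : ℝ)
    (h : ‖T - lam • (1 : H →L[ℂ] H)‖ ≤ r) (heq : ‖lam‖ = numRadius T) :
    ‖T‖ ^ 2 - numRadius T ^ 2 ≤ r ^ 2 := by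
  have hsq : ‖T - lam • (1 : H →L[ℂ] H)‖ ^ 2 ≤ r ^ 2 := pow_le_pow_left₀ (norm_nonneg _) h 2
  have hT : ‖T‖ ^ 2 ≤ ‖T - lam • (1 : H →L[ℂ] H)‖ ^ 2 + numRadius T ^ 2 :=
    T.opNorm_sq_le_of_norm_apply_sq_le (by positivity) fun x => by
      convert T.norm_apply_sq_le_norm_sub_smul_one_sq_add lam x using 2
      rw [heq]; ring
  linarith

theorem stmt_7 {H : Type*} [NormedAddCommGroup H] [InnerProductSpace ℂ H] [CompleteSpace H]
    (T : H →L[ℂ] H) (lam : ℂ) (r : ℝ) (hr : 0 < r)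
    (h : ‖T - lam • (1 : H →L[ℂ] H)‖ ≤ r) (heq : ‖lam‖ = numRadius T) :
    ‖T‖ ^ 2 - numRadius T ^ 2 ≤ r ^ 2 :=
  stmt_7_general T lam r h heq
end

section
/- Let T be a nonzero bounded linear operator on a complex Hilbert space, λ ∈ ℂ nonzero, r > 0 with |λ| > r and ‖T − λI‖ ≤ r. Then ‖T‖² − w(T)² ≤ (2r²/(|λ| + sqrt(|λ|² − r²)))·w(T). -/
open scoped InnerProductSpace

lemma norm_sq_le_of_norm_sub_smul_le {𝕜 H : Type*} [RCLike 𝕜] [NormedAddCommGroup H]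
    [InnerProductSpace 𝕜 H] {u x : H} (hx : ‖x‖ = 1) {lam : 𝕜} {r : ℝ}
    (h : ‖u - lam • x‖ ≤ r) :
    ‖u‖ ^ 2 ≤ r ^ 2 - ‖lam‖ ^ 2 + 2 * ‖lam‖ * ‖⟪u, x⟫_𝕜‖ := by
  have hexpand : ‖u - lam • x‖ ^ 2 = ‖u‖ ^ 2 - 2 * RCLike.re (lam * ⟪u, x⟫_𝕜) + ‖lam‖ ^ 2 := by
    rw [norm_sub_sq (𝕜 := 𝕜), inner_smul_right, norm_smul, hx, mul_one]
  have hre : RCLike.re (lam * ⟪u, x⟫_𝕜) ≤ ‖lam‖ * ‖⟪u, x⟫_𝕜‖ :=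
    (RCLike.re_le_norm _).trans_eq (norm_mul _ _)
  have hsq : ‖u - lam • x‖ ^ 2 ≤ r ^ 2 := pow_le_pow_left₀ (norm_nonneg _) h 2
  linarith

section NumericalRadius

variable {H : Type*} [NormedAddCommGroup H] [InnerProductSpace ℂ H]

lemma norm_inner_self_le_numRadius (T : H →L[ℂ] H) {x : H} (hx : ‖x‖ = 1) :
    ‖⟪T x, x⟫_ℂ‖ ≤ numRadius T := by
  refine le_csSup ⟨‖T‖, ?_⟩ ⟨x, hx, rfl⟩
  rintro _ ⟨y, hy, rfl⟩
  calc ‖⟪T y, y⟫_ℂ‖ ≤ ‖T y‖ * ‖y‖ := norm_inner_le_norm _ _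
    _ ≤ ‖T‖ * ‖y‖ * ‖y‖ := by gcongr; exact T.le_opNorm y
    _ = ‖T‖ := by rw [hy, mul_one, mul_one]

lemma opNorm_sq_le_of_norm_sub_smul_one_le [Nontrivial H] {T : H →L[ℂ] H} {lam : ℂ} {r : ℝ}
    (h : ‖T - lam • (1 : H →L[ℂ] H)‖ ≤ r) :
    ‖T‖ ^ 2 ≤ r ^ 2 - ‖lam‖ ^ 2 + 2 * ‖lam‖ * numRadius T := by
  set M := r ^ 2 - ‖lam‖ ^ 2 + 2 * ‖lam‖ * numRadius T
  have hunit : ∀ x : H, ‖x‖ = 1 → ‖T x‖ ^ 2 ≤ M := fun x hx => by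
    have hdist : ‖T x - lam • x‖ ≤ r := by
      simpa [hx] using ((T - lam • (1 : H →L[ℂ] H)).le_opNorm x).trans
        (mul_le_mul_of_nonneg_right h (norm_nonneg x))
    calc ‖T x‖ ^ 2 ≤ r ^ 2 - ‖lam‖ ^ 2 + 2 * ‖lam‖ * ‖⟪T x, x⟫_ℂ‖ :=
          norm_sq_le_of_norm_sub_smul_le hx hdist
      _ ≤ r ^ 2 - ‖lam‖ ^ 2 + 2 * ‖lam‖ * numRadius T := by
          gcongr; exact norm_inner_self_le_numRadius T hx
  obtain ⟨x₀, hx₀⟩ := exists_norm_eq H zero_le_one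
  have hM : 0 ≤ M := (sq_nonneg _).trans (hunit x₀ hx₀)
  have hT : ‖T‖ ≤ √M := T.opNorm_le_of_unit_norm (Real.sqrt_nonneg M) fun x hx =>
    Real.le_sqrt_of_sq_le (hunit x hx)
  calc ‖T‖ ^ 2 ≤ √M ^ 2 := pow_le_pow_left₀ (norm_nonneg _) hT 2
    _ = M := Real.sq_sqrt hM

end NumericalRadius

lemma sub_sq_add_two_mul_sub_sq_le {a r w : ℝ} (ha : 0 < a) (hra : r ^ 2 ≤ a ^ 2) :
    r ^ 2 - a ^ 2 + 2 * a * w - w ^ 2 ≤ 2 * r ^ 2 / (a + √(a ^ 2 - r ^ 2)) * w := by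
  set s := √(a ^ 2 - r ^ 2)
  have hs : s ^ 2 = a ^ 2 - r ^ 2 := Real.sq_sqrt (sub_nonneg.mpr hra)
  have has : a + s ≠ 0 := (add_pos_of_pos_of_nonneg ha (Real.sqrt_nonneg _)).ne'
  have hdiv : 2 * r ^ 2 / (a + s) = 2 * (a - s) := by
    rw [div_eq_iff has]
    linear_combination 2 * hs
  rw [hdiv]
  nlinarith [sq_nonneg (w - s)]

theorem stmt_12_general {H : Type*} [NormedAddCommGroup H] [InnerProductSpace ℂ H]
    (T : H →L[ℂ] H) (hT : T ≠ 0) (lam : ℂ) (r : ℝ)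
    (hlr : r < ‖lam‖) (h : ‖T - lam • (1 : H →L[ℂ] H)‖ ≤ r) :
    ‖T‖ ^ 2 - numRadius T ^ 2 ≤
      (2 * r ^ 2 / (‖lam‖ + Real.sqrt (‖lam‖ ^ 2 - r ^ 2))) *
        numRadius T := by
  have hr : 0 ≤ r := (norm_nonneg _).trans h
  have : Nontrivial H := not_subsingleton_iff_nontrivial.mp fun _ => hT (Subsingleton.elim _ _)
  have hnorm := opNorm_sq_le_of_norm_sub_smul_one_le h
  have halg := sub_sq_add_two_mul_sub_sq_le (w := numRadius T) (hr.trans_lt hlr)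
    (pow_le_pow_left₀ hr hlr.le 2)
  linarith

theorem stmt_12 {H : Type*} [NormedAddCommGroup H] [InnerProductSpace ℂ H] [CompleteSpace H]
    (T : H →L[ℂ] H) (hT : T ≠ 0) (lam : ℂ) (hlam : lam ≠ 0) (r : ℝ) (hr : 0 < r)
    (hlr : r < ‖lam‖) (h : ‖T - lam • (1 : H →L[ℂ] H)‖ ≤ r) :
    ‖T‖ ^ 2 - numRadius T ^ 2 ≤
      (2 * r ^ 2 / (‖lam‖ + Real.sqrt (‖lam‖ ^ 2 - r ^ 2))) *
        numRadius T :=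
  stmt_12_general T hT lam r hlr h
end

section
/- Let T be a bounded linear operator, λ ∈ ℂ nonzero, r > 0 with |λ| > r, and x a unit vector with ‖Tx − λx‖ ≤ r. Then ‖Tx‖² ≤ |⟨Tx,x⟩|² + 2|⟨Tx,x⟩|·(|λ| − sqrt(|λ|² − r²)). -/
open scoped InnerProductSpace

theorem norm_sub_smul_sq_of_norm_eq_one {𝕜 E : Type*} [RCLike 𝕜] [NormedAddCommGroup E]
    [InnerProductSpace 𝕜 E] {x : E} (hx : ‖x‖ = 1) (v : E) (μ : 𝕜) :
    ‖v - μ • x‖ ^ 2 = ‖⟪x, v⟫_𝕜 - μ‖ ^ 2 + ‖v - ⟪x, v⟫_𝕜 • x‖ ^ 2 := by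
  have hdecomp : v - μ • x = (⟪x, v⟫_𝕜 - μ) • x + (v - ⟪x, v⟫_𝕜 • x) := by
    rw [sub_smul]; abel
  have horth : ⟪(⟪x, v⟫_𝕜 - μ) • x, v - ⟪x, v⟫_𝕜 • x⟫_𝕜 = 0 := by
    simp only [inner_smul_left, inner_sub_right, inner_smul_right,
      inner_self_eq_one_of_norm_eq_one hx, mul_one]
    ring
  rw [hdecomp, sq, sq, sq, norm_add_sq_eq_norm_sq_add_norm_sq_of_inner_eq_zero _ _ horth,
    norm_smul, hx, mul_one]

theorem sq_sub_sq_sub_le_two_mul_sub_sqrt {t l r : ℝ} (hrl : r ^ 2 ≤ l ^ 2) :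
    r ^ 2 - (l - t) ^ 2 ≤ 2 * t * (l - Real.sqrt (l ^ 2 - r ^ 2)) := by
  have hs : Real.sqrt (l ^ 2 - r ^ 2) ^ 2 = l ^ 2 - r ^ 2 := Real.sq_sqrt (by linarith)
  nlinarith [sq_nonneg (t - Real.sqrt (l ^ 2 - r ^ 2))]

theorem stmt_13_general {H : Type*} [NormedAddCommGroup H] [InnerProductSpace ℂ H]
    (T : H →L[ℂ] H) (lam : ℂ) (r : ℝ)
    (hlr : r < ‖lam‖) (x : H) (hx : ‖x‖ = 1) (h : ‖T x - lam • x‖ ≤ r) :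
    ‖T x‖ ^ 2 ≤ ‖(inner ℂ (T x) x : ℂ)‖ ^ 2 +
      2 * ‖(inner ℂ (T x) x : ℂ)‖ *
        (‖lam‖ - Real.sqrt (‖lam‖ ^ 2 - r ^ 2)) := by
  set a : ℂ := ⟪x, T x⟫_ℂ
  set y : H := T x - a • x
  have hnorm : ‖T x‖ ^ 2 = ‖a‖ ^ 2 + ‖y‖ ^ 2 := by
    simpa using norm_sub_smul_sq_of_norm_eq_one hx (T x) (0 : ℂ)
  have hdist : ‖a - lam‖ ^ 2 + ‖y‖ ^ 2 ≤ r ^ 2 := by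
    rw [← norm_sub_smul_sq_of_norm_eq_one hx]
    exact pow_le_pow_left₀ (norm_nonneg _) h 2
  have hr : 0 ≤ r := (norm_nonneg _).trans h
  have hrev : (‖lam‖ - ‖a‖) ^ 2 ≤ ‖a - lam‖ ^ 2 := by
    rw [← sq_abs, norm_sub_rev]
    exact pow_le_pow_left₀ (abs_nonneg _) (abs_norm_sub_norm_le lam a) 2
  have key := sq_sub_sq_sub_le_two_mul_sub_sqrt (t := ‖a‖)
    (pow_le_pow_left₀ hr hlr.le 2)
  rw [norm_inner_symm, hnorm]
  linarith

theorem stmt_13 {H : Type*} [NormedAddCommGroup H] [InnerProductSpace ℂ H] [CompleteSpace H]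
    (T : H →L[ℂ] H) (lam : ℂ) (hlam : lam ≠ 0) (r : ℝ) (hr : 0 < r)
    (hlr : r < ‖lam‖) (x : H) (hx : ‖x‖ = 1) (h : ‖T x - lam • x‖ ≤ r) :
    ‖T x‖ ^ 2 ≤ ‖(inner ℂ (T x) x : ℂ)‖ ^ 2 +
      2 * ‖(inner ℂ (T x) x : ℂ)‖ *
        (‖lam‖ - Real.sqrt (‖lam‖ ^ 2 - r ^ 2)) :=
  stmt_13_general T lam r hlr x hx h
end
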